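/- A nonelementary finite simple graph G of order n with γ_R(G) = 4 is Roman saturated if and only if every pair of distinct vertices v_1, v_2 with deg(v_1) < n − 3 and deg(v_2) < n − 3 satisfies [v_1, v_2] ∈ E(G). -/

import Mathlib

open SimpleGraph

/-- A Roman domination function on `G`. -/
def IsRomanFn {V : Type*} (G : SimpleGraph V) (r : V → Fin 3) : Prop :=
  ∀ u, r u = 0 → ∃ v, G.Adj u v ∧ r v = 2

/-- The weight of a Roman domination function. -/
noncomputable def romanWeight {V : Type*} [Fintype V] (r : V → Fin 3) : ℕ :=
  ∑ u, (r u : ℕ)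

/-- The Roman domination number of `G`. -/
noncomputable def romanNumber {V : Type*} [Fintype V] (G : SimpleGraph V) : ℕ :=
  sInf {w | ∃ r : V → Fin 3, IsRomanFn G r ∧ romanWeight r = w}

/-- `G` is vertex critical. -/
def VCritical {V : Type*} [Fintype V] [DecidableEq V] (G : SimpleGraph V) : Prop :=
  ∀ v : V, romanNumber (G.induce {u | u ≠ v}) = romanNumber G - 1

/-- `G` is edge critical. -/
def ECritical {V : Type*} [Fintype V] [DecidableEq V] (G : SimpleGraph V) : Prop :=
  VCritical G ∧ ∀ e ∈ G.edgeSet, ¬ VCritical (G.deleteEdges {e})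

/-- `G` is Roman saturated. -/
def RomanSaturated {V : Type*} [Fintype V] (G : SimpleGraph V) : Prop :=
  ∀ v w : V, v ≠ w → ¬ G.Adj v w →
    romanNumber (G ⊔ SimpleGraph.fromEdgeSet {s(v, w)}) = romanNumber G - 1

/-- `v` is a cut vertex of `G`. -/
def IsCutVertex {V : Type*} [Fintype V] [DecidableEq V] (G : SimpleGraph V) (v : V) : Prop :=
  Nat.card G.ConnectedComponent < Nat.card (G.induce {u | u ≠ v}).ConnectedComponent

/-!
For `n > 3`, a graph `H` of order `n` has `γ_R(H) ≤ 3` exactly when it has a vertex of degree at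
least `n - 2`: a vertex `x` yields the Roman function that is `2` at `x`, `0` on its neighbours and
`1` elsewhere, of weight `n + 1 - deg x`; conversely, a Roman function of weight at most `3` has a
unique vertex labelled `2`, which must dominate every `0`. As `γ_R(G) = 4`, every vertex of `G` has
degree at most `n - 3`, and adding an edge lowers `γ_R` by at most one (relabel by `1` the single
vertex that may lose its `2`-neighbour). Hence `γ_R(G + vw) = 3` iff `v` or `w` has degree `n - 3`.
-/

namespace SimpleGraph

variable {V : Type*} {G : SimpleGraph V}

lemma neighborSet_sup_edge_of_ne {v w x : V} (hxv : x ≠ v) (hxw : x ≠ w) :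
    (G ⊔ edge v w).neighborSet x = G.neighborSet x := by
  ext y
  simp only [mem_neighborSet, sup_adj, edge_adj, or_iff_left_iff_imp]
  rintro ⟨⟨rfl, -⟩ | ⟨rfl, -⟩, -⟩ <;> contradiction

lemma neighborSet_sup_edge_left {v w : V} (hvw : v ≠ w) :
    (G ⊔ edge v w).neighborSet v = insert w (G.neighborSet v) := by
  ext y
  simp only [mem_neighborSet, sup_adj, edge_adj, Set.mem_insert_iff]
  constructor
  · rintro (h | ⟨⟨-, rfl⟩ | ⟨rfl, -⟩, -⟩)
    exacts [Or.inr h, Or.inl rfl, absurd rfl hvw]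
  · rintro (rfl | h)
    exacts [Or.inr ⟨Or.inl ⟨trivial, rfl⟩, hvw⟩, Or.inl h]

lemma ncard_neighborSet_sup_edge_left [Finite V] {v w : V} (hvw : v ≠ w) (h : ¬G.Adj v w) :
    ((G ⊔ edge v w).neighborSet v).ncard = (G.neighborSet v).ncard + 1 := by
  rw [neighborSet_sup_edge_left hvw, Set.ncard_insert_of_notMem (by simpa using h)]

end SimpleGraph

section Roman

open Finset

variable {V : Type*} {G : SimpleGraph V} {r : V → Fin 3}

lemma IsRomanFn.update_of_sup_edge [DecidableEq V] {v w u : V} (hr : IsRomanFn (G ⊔ edge v w) r)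
    (hu : r u = 0) (hundom : ∀ y, G.Adj u y → r y ≠ 2) :
    IsRomanFn G (Function.update r u 1) := by
  obtain ⟨y, huy, hy⟩ := hr u hu
  intro z hz
  have hzu : z ≠ u := by rintro rfl; simp at hz
  rw [Function.update_of_ne hzu] at hz
  obtain ⟨t, hzt, ht⟩ := hr z hz
  have htu : t ≠ u := by rintro rfl; simp [hu] at ht
  refine ⟨t, ?_, by rwa [Function.update_of_ne htu]⟩
  by_contra hG
  -- `z t` and `u y` would both be the new edge `v w`, forcing `z = u` or `t = u`
  have hzt' := ((adj_edge _ _).1 (hzt.resolve_left hG)).1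
  have huy' := ((adj_edge _ _).1 (huy.resolve_left fun h => hundom y h hy)).1
  rcases Sym2.eq_iff.1 (hzt'.symm.trans huy') with ⟨h, -⟩ | ⟨-, h⟩
  exacts [hzu h, htu h]

variable [Fintype V]

lemma romanWeight_update_of_eq_zero [DecidableEq V] {u : V} (hu : r u = 0) :
    romanWeight (Function.update r u 1) = romanWeight r + 1 := by
  have hpoint : ∀ v, (Function.update r u 1 v : ℕ) = r v + if v = u then 1 else 0 := by
    intro v
    by_cases hvu : v = u
    · subst hvu; simp [hu]
    · simp [hvu]
  simp only [romanWeight, hpoint, sum_add_distrib, sum_ite_eq', mem_univ, if_true]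

lemma romanNumber_le_romanWeight (hr : IsRomanFn G r) : romanNumber G ≤ romanWeight r :=
  Nat.sInf_le ⟨r, hr, rfl⟩

lemma exists_isRomanFn_romanWeight_eq (G : SimpleGraph V) :
    ∃ r, IsRomanFn G r ∧ romanWeight r = romanNumber G :=
  Nat.sInf_mem (s := {w | ∃ r, IsRomanFn G r ∧ romanWeight r = w})
    ⟨_, fun _ => 1, fun _ h => by simp at h, rfl⟩

lemma sum_ite_adj_eq_ncard_neighborSet (G : SimpleGraph V) (x : V) [DecidablePred (G.Adj x)] :
    ∑ u, (if G.Adj x u then 1 else 0) = (G.neighborSet x).ncard := by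
  rw [sum_boole, Nat.cast_id, ← Set.ncard_coe_finset]
  congr
  ext
  simp

lemma romanNumber_add_ncard_neighborSet_le (x : V) :
    romanNumber G + (G.neighborSet x).ncard ≤ Fintype.card V + 1 := by
  classical
  let r : V → Fin 3 := fun u => if u = x then 2 else if G.Adj x u then 0 else 1
  have hr : IsRomanFn G r := fun u hu => by
    have hux : u ≠ x := by rintro rfl; simp [r] at hu
    have hxu : G.Adj x u := by by_contra h; simp [r, hux, h] at hu
    exact ⟨x, hxu.symm, by simp [r]⟩
  have hpoint : ∀ u, (r u : ℕ) + (if G.Adj x u then 1 else 0) = 1 + if u = x then 1 else 0 := by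
    intro u
    by_cases hux : u = x
    · subst hux; simp [r]
    · by_cases hxu : G.Adj x u <;> simp [r, hux, hxu]
  have hsum : romanWeight r + (G.neighborSet x).ncard = Fintype.card V + 1 := by
    rw [romanWeight, ← sum_ite_adj_eq_ncard_neighborSet, ← sum_add_distrib,
      Fintype.sum_congr _ _ hpoint, sum_add_distrib]
    simp
  linarith [romanNumber_le_romanWeight hr]

lemma IsRomanFn.exists_eq_two (hr : IsRomanFn G r) (hw : romanWeight r < Fintype.card V) :
    ∃ x, r x = 2 := by
  by_contra! h
  have hpos : ∀ u, 1 ≤ (r u : ℕ) := fun u => by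
    by_contra! h0
    obtain ⟨y, -, hy⟩ := hr u (Fin.ext (by omega))
    exact h y hy
  have : Fintype.card V ≤ romanWeight r := by
    rw [Fintype.card_eq_sum_ones]
    exact sum_le_sum fun u _ => hpos u
  omega

lemma eq_of_romanWeight_lt_four (hw : romanWeight r < 4) {a b : V} (ha : r a = 2)
    (hb : r b = 2) : a = b := by
  classical
  by_contra hab
  have : ∑ u ∈ {a, b}, (r u : ℕ) ≤ romanWeight r :=
    sum_le_univ_sum_of_nonneg fun _ => Nat.zero_le _
  rw [sum_pair hab, ha, hb] at this
  simp at this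
  omega

lemma IsRomanFn.card_add_one_le (hr : IsRomanFn G r) {x : V} (hx : r x = 2)
    (huniq : ∀ y, r y = 2 → y = x) :
    Fintype.card V + 1 ≤ romanWeight r + (G.neighborSet x).ncard := by
  classical
  have hpoint : ∀ u, 1 + (if u = x then 1 else 0) ≤ (r u : ℕ) + if G.Adj x u then 1 else 0 := by
    intro u
    by_cases hux : u = x
    · subst hux; simp [hx]
    · rcases Nat.eq_zero_or_pos (r u : ℕ) with h0 | hpos
      · obtain ⟨y, hadj, hy⟩ := hr u (Fin.ext h0)
        obtain rfl := huniq y hy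
        simp [hux, hadj.symm, h0]
      · simp [hux]; omega
  calc Fintype.card V + 1 = ∑ u, (1 + if u = x then 1 else 0) := by simp [sum_add_distrib]
    _ ≤ ∑ u, ((r u : ℕ) + if G.Adj x u then 1 else 0) := sum_le_sum fun u _ => hpoint u
    _ = _ := by rw [sum_add_distrib, sum_ite_adj_eq_ncard_neighborSet]; rfl

lemma exists_card_add_one_le_romanNumber_add_ncard (h3 : romanNumber G ≤ 3)
    (hn : romanNumber G < Fintype.card V) :
    ∃ x, Fintype.card V + 1 ≤ romanNumber G + (G.neighborSet x).ncard := by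
  obtain ⟨r, hr, hw⟩ := exists_isRomanFn_romanWeight_eq G
  obtain ⟨x, hx⟩ := hr.exists_eq_two (hw ▸ hn)
  exact ⟨x, hw ▸ hr.card_add_one_le hx fun y hy => eq_of_romanWeight_lt_four (by omega) hy hx⟩

lemma romanNumber_le_three_iff (hn : 3 < Fintype.card V) :
    romanNumber G ≤ 3 ↔ ∃ x, Fintype.card V ≤ (G.neighborSet x).ncard + 2 := by
  constructor
  · intro h3
    obtain ⟨x, hx⟩ := exists_card_add_one_le_romanNumber_add_ncard h3 (by omega)
    exact ⟨x, by omega⟩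
  · rintro ⟨x, hx⟩
    have := romanNumber_add_ncard_neighborSet_le (G := G) x
    omega

lemma romanNumber_le_romanNumber_sup_edge_add_one (v w : V) :
    romanNumber G ≤ romanNumber (G ⊔ edge v w) + 1 := by
  classical
  obtain ⟨r, hr, hw⟩ := exists_isRomanFn_romanWeight_eq (G ⊔ edge v w)
  by_cases hG : IsRomanFn G r
  · exact hw ▸ (romanNumber_le_romanWeight hG).trans (Nat.le_succ _)
  · obtain ⟨u, hu, hundom⟩ : ∃ u, r u = 0 ∧ ∀ y, G.Adj u y → r y ≠ 2 := by
      simpa [IsRomanFn] using hG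
    calc romanNumber G ≤ romanWeight (Function.update r u 1) :=
          romanNumber_le_romanWeight (hr.update_of_sup_edge hu hundom)
      _ = romanNumber (G ⊔ edge v w) + 1 := by rw [romanWeight_update_of_eq_zero hu, hw]

lemma romanNumber_sup_edge_le_three_iff (hn : 3 < Fintype.card V)
    (hdeg : ∀ x, (G.neighborSet x).ncard + 3 ≤ Fintype.card V) {v w : V} (hvw : v ≠ w)
    (hadj : ¬G.Adj v w) :
    romanNumber (G ⊔ edge v w) ≤ 3 ↔ Fintype.card V ≤ (G.neighborSet v).ncard + 3 ∨
      Fintype.card V ≤ (G.neighborSet w).ncard + 3 := by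
  have hv := ncard_neighborSet_sup_edge_left hvw hadj
  have hw : ((G ⊔ edge v w).neighborSet w).ncard = (G.neighborSet w).ncard + 1 := by
    rw [edge_comm]
    exact ncard_neighborSet_sup_edge_left hvw.symm fun h => hadj h.symm
  rw [romanNumber_le_three_iff hn]
  constructor
  · rintro ⟨x, hx⟩
    by_cases hxv : x = v
    · subst hxv; omega
    by_cases hxw : x = w
    · subst hxw; omega
    rw [neighborSet_sup_edge_of_ne hxv hxw] at hx
    have := hdeg x
    omega
  · rintro (h | h)
    exacts [⟨v, by omega⟩, ⟨w, by omega⟩]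

end Roman

/-- a nonelementary graph of order `n` with γ_R(G) = 4 is Roman saturated iff
every pair of distinct vertices of degree < n - 3 is adjacent. -/
theorem romanSaturated_iff_small_degrees_adjacent {V : Type*} [Fintype V]
    (G : SimpleGraph V) (hne : romanNumber G < Fintype.card V) (h4 : romanNumber G = 4) :
    RomanSaturated G ↔ ∀ v w : V, v ≠ w →
      (G.neighborSet v).ncard < Fintype.card V - 3 →
      (G.neighborSet w).ncard < Fintype.card V - 3 → G.Adj v w := by
  have hdeg (x : V) : (G.neighborSet x).ncard + 3 ≤ Fintype.card V := by
    have := romanNumber_add_ncard_neighborSet_le (G := G) x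
    omega
  refine forall₂_congr fun v w => forall_congr' fun hvw => ?_
  by_cases hadj : G.Adj v w
  · simp [hadj]
  have hlow := romanNumber_le_romanNumber_sup_edge_add_one (G := G) v w
  have hup := romanNumber_sup_edge_le_three_iff (by omega) hdeg hvw hadj
  show ¬G.Adj v w → romanNumber (G ⊔ edge v w) = romanNumber G - 1 ↔ _
  simp only [hadj, not_false_eq_true, forall_const, imp_false, not_lt]
  omega
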